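/- Let ℰ = (E_n)_{n≥1} be a spread in a set Ω, and let T be one of the set systems T_max(ℰ), T_min(ℰ), T_ort(ℰ). If F ⊆ T is an incompressible family with |F| ≥ 3, then all members of F have the same level; that is, there exists n such that every member of F arises from index n in the definition of T. -/

import Mathlib

/-!
In `T_max` a member of lower level is contained in every member of higher level, and in `T_min`
the other way round, so two members of an incompressible family cannot have different levels.
In `T_ort` two members of different levels already cover the join, which contains every member,
so a third member of the family would be redundant.
-/

open Set Filter
open scoped Classical

variable {Ω : Type*}

/-- A union-closed set system (concrete semilattice) on `Ω`. -/
def UnionClosed (S : Set (Set Ω)) : Prop := ∀ x ∈ S, ∀ y ∈ S, x ∪ y ∈ S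

/-- A finite collection of subsets of `Ω` is incompressible if no proper
subcollection has the same union. -/
def Incompressible (F : Finset (Set Ω)) : Prop :=
  ∀ F' ⊂ F, ⋃₀ (↑F' : Set (Set Ω)) ≠ ⋃₀ (↑F : Set (Set Ω))

/-- `S` has infinite breadth: incompressible subcollections of every size. -/
def InfiniteBreadth (S : Set (Set Ω)) : Prop :=
  ∀ n : ℕ, ∃ F : Finset (Set Ω), ↑F ⊆ S ∧ F.card = n ∧ Incompressible F

/-- `S` has finite breadth. -/
def FiniteBreadth (S : Set (Set Ω)) : Prop :=
  ∃ N : ℕ, ∀ F : Finset (Set Ω), ↑F ⊆ S → Incompressible F → F.card ≤ N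

/-- `S` has breadth at most `m`. -/
def BreadthLE (S : Set (Set Ω)) (m : ℕ) : Prop :=
  ∀ F : Finset (Set Ω), ↑F ⊆ S → Incompressible F → F.card ≤ m

/-- `S ⊓ a = { x ∩ a : x ∈ S }`. -/
def proj (S : Set (Set Ω)) (a : Set Ω) : Set (Set Ω) := (fun x => x ∩ a) '' S

/-- `S ⊖ a = { x \ a : x ∈ S }`. -/
def ominus (S : Set (Set Ω)) (a : Set Ω) : Set (Set Ω) := (fun x => x \ a) '' S

/-- `S^{−Γ} = { x ∈ S : x ∩ Γ = ∅ }`. -/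
def avoid (S : Set (Set Ω)) (Γ : Set Ω) : Set (Set Ω) := {x ∈ S | x ∩ Γ = ∅}

/-- A spread: pairwise disjoint nonempty finite sets with sizes tending to infinity. -/
def IsSpread (E : ℕ → Set Ω) : Prop :=
  (∀ n, (E n).Finite) ∧ (∀ n, (E n).Nonempty) ∧
  (∀ m n, m ≠ n → Disjoint (E m) (E n)) ∧
  Tendsto (fun n => (E n).ncard) atTop atTop

/-- The join of a spread. -/
def sjoin (E : ℕ → Set Ω) : Set Ω := ⋃ n, E n

/-- The set system `T_max(ℰ)`. -/
def Tmax (E : ℕ → Set Ω) : Set (Set Ω) :=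
  {x | ∃ n, ∃ a : Set Ω, a ⊆ E n ∧ a.Nonempty ∧ x = (⋃ k < n, E k) ∪ a}

/-- The set system `T_min(ℰ)`. -/
def Tmin (E : ℕ → Set Ω) : Set (Set Ω) :=
  {x | ∃ n, ∃ a : Set Ω, a ⊆ E n ∧ a.Nonempty ∧ x = a ∪ ⋃ k > n, E k}

/-- The set system `T_ort(ℰ)`. -/
def Tort (E : ℕ → Set Ω) : Set (Set Ω) :=
  {x | ∃ n, ∃ a : Set Ω, a ⊆ E n ∧ a.Nonempty ∧
        x = (⋃ k < n, E k) ∪ a ∪ ⋃ k > n, E k}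

/-- A refinement of a spread. -/
def Refines (F E : ℕ → Set Ω) : Prop :=
  IsSpread F ∧ ∃ g : ℕ → ℕ, Function.Injective g ∧ ∀ j, F j ⊆ E (g j)

/-- The sequence `a` shatters the spread `E`. -/
def Shatters (a : ℕ → Set Ω) (E : ℕ → Set Ω) : Prop :=
  ∀ (m : ℕ) (y : ℕ → Set Ω), (∀ j < m, y j = a j ∨ y j = (a j)ᶜ) →
    Tendsto (fun n => (E n ∩ ⋂ j < m, y j).ncard) atTop atTop

/-- A finite partition of `Ω`. -/
def IsPartitionC (C : Finset (Set Ω)) : Prop :=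
  (∀ c ∈ C, ∀ d ∈ C, c ≠ d → Disjoint c d) ∧ ⋃₀ (↑C : Set (Set Ω)) = univ

/-- `C` colours the spread `E`. -/
def Colours (C : Finset (Set Ω)) (E : ℕ → Set Ω) : Prop :=
  ∀ c ∈ C, Tendsto (fun n => (c ∩ E n).ncard) atTop atTop

/-- The colouring `C` of the spread `E` is `S`-decisive. -/
def Decisive (S : Set (Set Ω)) (C : Finset (Set Ω)) (E : ℕ → Set Ω) : Prop :=
  ∃ c₀ ∈ C, ∀ x ∈ S, ∃ B : ℕ, ∀ n,
    (x ∩ c₀ ∩ E n).ncard ≤ B ∨ ∃ c ∈ C, (xᶜ ∩ c ∩ E n).ncard ≤ B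

/-- `F` halves `D` with respect to `(E n)_{n ∈ N}`. -/
def Halves (F D : Set Ω) (E : ℕ → Set Ω) (N : Set ℕ) : Prop :=
  Tendsto (fun n => (D ∩ F ∩ E n).ncard) (atTop ⊓ 𝓟 N) atTop ∧
  Tendsto (fun n => ((D \ F) ∩ E n).ncard) (atTop ⊓ 𝓟 N) atTop

/-- `Ew` is a witness of incompressibility for the collection `F`. -/
def IsWitness (F : Finset (Set Ω)) (Ew : Set Ω) : Prop :=
  ∃ w : Set Ω → Ω, (∀ x ∈ F, w x ∈ x ∧ ∀ y ∈ F, y ≠ x → w x ∉ y) ∧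
    Ew = w '' (↑F : Set (Set Ω))

/-- Condition (A). -/
def CondA (S : Set (Set Ω)) : Prop :=
  ∀ k : ℕ, ∀ p ∈ insert (∅ : Set Ω) S, InfiniteBreadth (proj S pᶜ) →
    ∃ F : Finset (Set Ω), ↑F ⊆ ominus S p ∧ F.card = k ∧ Incompressible F ∧
      InfiniteBreadth (proj (ominus S p) (⋃₀ (↑F : Set (Set Ω)))ᶜ)

/-- Condition (B). -/
def CondB (S : Set (Set Ω)) : Prop :=
  ∀ k : ℕ, ∀ c Γ : Set Ω, InfiniteBreadth (proj (avoid S Γ) c) →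
    ∃ F : Finset (Set Ω), ↑F ⊆ proj (avoid S Γ) c ∧ F.card = k ∧ Incompressible F ∧
      ∃ Ew : Set Ω, IsWitness F Ew ∧ InfiniteBreadth (proj (avoid S (Γ ∪ Ew)) c)

/-- Incompressibility in an abstract (sup-)semilattice: the product (sup) over any proper
nonempty subset differs from the product over the whole set. -/
def AIncomp {S : Type*} [SemilatticeSup S] (E : Finset S) : Prop :=
  ∀ E' ⊂ E, ∀ (h' : E'.Nonempty) (h : E.Nonempty), E'.sup' h' id ≠ E.sup' h id

/-- Incompressibility in an abstract meet-semilattice. -/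
def AIncompInf {S : Type*} [SemilatticeInf S] (E : Finset S) : Prop :=
  ∀ E' ⊂ E, ∀ (h' : E'.Nonempty) (h : E.Nonempty), E'.inf' h' id ≠ E.inf' h id

/-- The standard spread on ℕ × ℕ: `E0 n = {(n,k) : k ≤ n}` (0-based, |E0 n| = n+1). -/
def E0 : ℕ → Set (ℕ × ℕ) := fun n => {p | p.1 = n ∧ p.2 ≤ n}

section Incompressible

variable {F : Finset (Set Ω)} {x y z : Set Ω}

theorem Incompressible.not_subset_sUnion_erase (hF : Incompressible F) (hz : z ∈ F) :
    ¬ z ⊆ ⋃₀ ↑(F.erase z) := by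
  intro hsub
  refine hF (F.erase z) (Finset.erase_ssubset hz) (subset_antisymm ?_ ?_)
  · exact sUnion_subset_sUnion (Finset.coe_subset.mpr (F.erase_subset z))
  · refine sUnion_subset fun s hs => ?_
    by_cases hsz : s = z
    · exact hsz ▸ hsub
    · exact subset_sUnion_of_mem (Finset.mem_coe.mpr (Finset.mem_erase.mpr ⟨hsz, hs⟩))

theorem Incompressible.not_subset_of_ne (hF : Incompressible F) (hx : x ∈ F) (hy : y ∈ F)
    (hxy : x ≠ y) : ¬ x ⊆ y := fun hsub =>
  hF.not_subset_sUnion_erase hx <|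
    hsub.trans (subset_sUnion_of_mem (Finset.mem_coe.mpr (Finset.mem_erase.mpr ⟨hxy.symm, hy⟩)))

theorem Incompressible.not_subset_union (hF : Incompressible F) (hx : x ∈ F) (hy : y ∈ F)
    (hz : z ∈ F) (hzx : z ≠ x) (hzy : z ≠ y) : ¬ z ⊆ x ∪ y := fun hsub =>
  hF.not_subset_sUnion_erase hz <| hsub.trans <| union_subset
    (subset_sUnion_of_mem (Finset.mem_coe.mpr (Finset.mem_erase.mpr ⟨hzx.symm, hx⟩)))
    (subset_sUnion_of_mem (Finset.mem_coe.mpr (Finset.mem_erase.mpr ⟨hzy.symm, hy⟩)))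

end Incompressible

theorem Finset.Nonempty.exists_common_level {ι : Type*} [LinearOrder ι] {P : ι → Set Ω → Prop}
    {F : Finset (Set Ω)} (hne : F.Nonempty) (hlevel : ∀ x ∈ F, ∃ i, P i x)
    (hsep : ∀ x ∈ F, ∀ y ∈ F, x ≠ y → ∀ i j, P i x → P j y → ¬ i < j) :
    ∃ i, ∀ x ∈ F, P i x := by
  obtain ⟨x₀, hx₀⟩ := hne
  obtain ⟨i₀, hi₀⟩ := hlevel x₀ hx₀
  refine ⟨i₀, fun x hx => ?_⟩
  by_cases hxx₀ : x = x₀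
  · exact hxx₀ ▸ hi₀
  obtain ⟨i, hi⟩ := hlevel x hx
  rcases lt_trichotomy i i₀ with hlt | rfl | hgt
  · exact absurd hlt (hsep x hx x₀ hx₀ hxx₀ i i₀ hi hi₀)
  · exact hi
  · exact absurd hgt (hsep x₀ hx₀ x hx (Ne.symm hxx₀) i₀ i hi₀ hi)

section Levels

variable {E : ℕ → Set Ω} {m n : ℕ} {a b : Set Ω}

theorem iUnion_lt_union_subset_of_lt (ha : a ⊆ E m) (hmn : m < n) :
    (⋃ k < m, E k) ∪ a ⊆ (⋃ k < n, E k) ∪ b := by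
  refine subset_union_of_subset_left (union_subset ?_ ?_) b
  · exact iUnion₂_mono' fun k (hk : k < m) => ⟨k, hk.trans hmn, subset_rfl⟩
  · exact ha.trans (subset_iUnion₂ (s := fun k (_ : k < n) => E k) m hmn)

theorem union_iUnion_gt_subset_of_lt (hb : b ⊆ E n) (hmn : m < n) :
    b ∪ ⋃ k > n, E k ⊆ a ∪ ⋃ k > m, E k := by
  refine subset_union_of_subset_right (union_subset ?_ ?_) a
  · exact hb.trans (subset_iUnion₂ (s := fun k (_ : k > m) => E k) n hmn)
  · exact iUnion₂_mono' fun k (hk : k > n) => ⟨k, hmn.trans hk, subset_rfl⟩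

theorem iUnion_subset_union_of_lt (hmn : m < n) :
    ⋃ k, E k ⊆ ((⋃ k < m, E k) ∪ a ∪ ⋃ k > m, E k) ∪ ((⋃ k < n, E k) ∪ b ∪ ⋃ k > n, E k) := by
  intro t ht
  obtain ⟨k, hk⟩ := mem_iUnion.mp ht
  simp only [mem_union, mem_iUnion, exists_prop]
  rcases lt_trichotomy k m with hkm | rfl | hkm
  · exact .inl (.inl (.inl ⟨k, hkm, hk⟩))
  · exact .inr (.inl (.inl ⟨k, hmn, hk⟩))
  · exact .inl (.inr ⟨k, hkm, hk⟩)

theorem union_iUnion_subset_iUnion (ha : a ⊆ E m) :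
    (⋃ k < m, E k) ∪ a ∪ ⋃ k > m, E k ⊆ ⋃ k, E k :=
  union_subset (union_subset (iUnion₂_subset fun k _ => subset_iUnion E k)
    (ha.trans (subset_iUnion E m))) (iUnion₂_subset fun k _ => subset_iUnion E k)

end Levels

section Tsystems

variable {E : ℕ → Set Ω} {F : Finset (Set Ω)}

theorem Incompressible.exists_level_of_subset_tmax (hF : Incompressible F) (hT : ↑F ⊆ Tmax E)
    (hne : F.Nonempty) :
    ∃ n, ∀ x ∈ F, ∃ a : Set Ω, a ⊆ E n ∧ a.Nonempty ∧ x = (⋃ k < n, E k) ∪ a :=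
  hne.exists_common_level (fun _ hx => hT hx)
    fun _ hx _ hy hxy _ _ ⟨_, ha, _, hxa⟩ ⟨_, _, _, hyb⟩ hmn =>
      hF.not_subset_of_ne hx hy hxy (hxa ▸ hyb ▸ iUnion_lt_union_subset_of_lt ha hmn)

theorem Incompressible.exists_level_of_subset_tmin (hF : Incompressible F) (hT : ↑F ⊆ Tmin E)
    (hne : F.Nonempty) :
    ∃ n, ∀ x ∈ F, ∃ a : Set Ω, a ⊆ E n ∧ a.Nonempty ∧ x = a ∪ ⋃ k > n, E k :=
  hne.exists_common_level (fun _ hx => hT hx)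
    fun _ hx _ hy hxy _ _ ⟨_, _, _, hxa⟩ ⟨_, hb, _, hyb⟩ hmn =>
      hF.not_subset_of_ne hy hx (Ne.symm hxy) (hxa ▸ hyb ▸ union_iUnion_gt_subset_of_lt hb hmn)

theorem Incompressible.exists_level_of_subset_tort (hF : Incompressible F) (hT : ↑F ⊆ Tort E)
    (hcard : 3 ≤ F.card) :
    ∃ n, ∀ x ∈ F, ∃ a : Set Ω, a ⊆ E n ∧ a.Nonempty ∧
      x = (⋃ k < n, E k) ∪ a ∪ ⋃ k > n, E k := by
  have hne : F.Nonempty := Finset.card_pos.mp (by omega)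
  refine hne.exists_common_level (fun _ hx => hT hx) ?_
  rintro x hx y hy hxy m n ⟨a, -, -, hxa⟩ ⟨b, -, -, hyb⟩ hmn
  have hcard_erase : 1 < (F.erase x).card := by rw [Finset.card_erase_of_mem hx]; omega
  obtain ⟨z, hz, hzy⟩ := Finset.exists_mem_ne hcard_erase y
  obtain ⟨hzx, hz⟩ := Finset.mem_erase.mp hz
  obtain ⟨l, c, hc, -, rfl⟩ := hT hz
  refine hF.not_subset_union hx hy hz hzx hzy ?_
  rw [hxa, hyb]
  exact (union_iUnion_subset_iUnion hc).trans (iUnion_subset_union_of_lt hmn)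

end Tsystems

theorem stmt19_general {Ω : Type*} (E : ℕ → Set Ω) :
    (∀ F : Finset (Set Ω), ↑F ⊆ Tmax E → Incompressible F → 3 ≤ F.card →
      ∃ n, ∀ x ∈ F, ∃ a : Set Ω, a ⊆ E n ∧ a.Nonempty ∧
        x = (⋃ k < n, E k) ∪ a) ∧
    (∀ F : Finset (Set Ω), ↑F ⊆ Tmin E → Incompressible F → 3 ≤ F.card →
      ∃ n, ∀ x ∈ F, ∃ a : Set Ω, a ⊆ E n ∧ a.Nonempty ∧
        x = a ∪ ⋃ k > n, E k) ∧
    (∀ F : Finset (Set Ω), ↑F ⊆ Tort E → Incompressible F → 3 ≤ F.card →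
      ∃ n, ∀ x ∈ F, ∃ a : Set Ω, a ⊆ E n ∧ a.Nonempty ∧
        x = (⋃ k < n, E k) ∪ a ∪ ⋃ k > n, E k) :=
  ⟨fun _ hT hF hcard => hF.exists_level_of_subset_tmax hT (Finset.card_pos.mp (by omega)),
    fun _ hT hF hcard => hF.exists_level_of_subset_tmin hT (Finset.card_pos.mp (by omega)),
    fun _ hT hF hcard => hF.exists_level_of_subset_tort hT hcard⟩

/-- In each of `T_max(ℰ)`, `T_min(ℰ)`, `T_ort(ℰ)`, any incompressible family with at
least 3 members lies in a single level. -/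
theorem stmt19 {Ω : Type*} (E : ℕ → Set Ω) (hE : IsSpread E) :
    (∀ F : Finset (Set Ω), ↑F ⊆ Tmax E → Incompressible F → 3 ≤ F.card →
      ∃ n, ∀ x ∈ F, ∃ a : Set Ω, a ⊆ E n ∧ a.Nonempty ∧
        x = (⋃ k < n, E k) ∪ a) ∧
    (∀ F : Finset (Set Ω), ↑F ⊆ Tmin E → Incompressible F → 3 ≤ F.card →
      ∃ n, ∀ x ∈ F, ∃ a : Set Ω, a ⊆ E n ∧ a.Nonempty ∧
        x = a ∪ ⋃ k > n, E k) ∧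
    (∀ F : Finset (Set Ω), ↑F ⊆ Tort E → Incompressible F → 3 ≤ F.card →
      ∃ n, ∀ x ∈ F, ∃ a : Set Ω, a ⊆ E n ∧ a.Nonempty ∧
        x = (⋃ k < n, E k) ∪ a ∪ ⋃ k > n, E k) :=
  stmt19_general E
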